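/- arXiv:2005.09706 — 2 statements merged into one kernel-verified Lean document; each statement's English description precedes it below -/
import Mathlib

section
/- Let q be a prime power, F the finite field with q² elements, and F(v) = v₁^{q+1} − v₂^q·v₃ − v₃^q·v₂ for v ∈ F³. For every 2-dimensional F-subspace W of F³, the number of 1-dimensional subspaces L ⊆ W such that F vanishes identically on L is at most q+1. (Equivalently: every line in the projective plane over 𝔽_{q²} contains at most q+1 points of the Hermitian curve.) -/
/-!
Choose a basis `a, b` of `W`. The points of the line are `[a]` and `[c • a + b]` for `c : F`, and
if `H` is the Hermitian form whose diagonal is `hermF q`, then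
`hermF q (c • a + b) = H(a,a) c^(q+1) + H(a,b) c^q + H(b,a) c + H(b,b)`.
If `[a]` is off the curve, `H(a,a) ≠ 0` and this polynomial in `c` has at most `q + 1` roots.
If `[a]` is on the curve, the polynomial has degree at most `q`, and it is nonzero because `H` is
nondegenerate on `F³`, so it has no totally isotropic plane; this gives at most `q` further points.
-/

/-- The defining form of the Hermitian curve: F(v) = v₀^{q+1} − v₁^q·v₂ − v₂^q·v₁. -/
def hermF (q : ℕ) {F : Type*} [Field F] (v : Fin 3 → F) : F :=
  v 0 ^ (q + 1) - v 1 ^ q * v 2 - v 2 ^ q * v 1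

open Polynomial Module Submodule Matrix

lemma FiniteField.exists_surjective_ringHom_eq_pow {F : Type*} [Field F] [Fintype F] {q n : ℕ}
    (hq : IsPrimePow q) (hcard : Fintype.card F = q ^ n) :
    ∃ σ : F →+* F, Function.Surjective σ ∧ ∀ x, σ x = x ^ q := by
  obtain ⟨p, k, hp, -, rfl⟩ := hq
  have := Fact.mk hp.nat_prime
  have : CharP F p := charP_of_card_eq_prime_pow (by rw [hcard, ← pow_mul])
  exact ⟨iterateFrobenius F p k, Finite.injective_iff_surjective.mp (RingHom.injective _),
    iterateFrobenius_def p k⟩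

section HermitianForm

variable {F : Type*} [Field F] {σ : F →+* F}

variable (σ) in
/-- `hermDual σ u ⬝ᵥ v = σ u₀ v₀ - σ u₁ v₂ - σ u₂ v₁` is the Hermitian form whose diagonal is
`hermF q` when `σ = (· ^ q)`. -/
def hermDual : (Fin 3 → F) →ₛₗ[σ] (Fin 3 → F) where
  toFun u := ![σ (u 0), -σ (u 2), -σ (u 1)]
  map_add' u v := by ext i; fin_cases i <;> simp [add_comm]
  map_smul' c u := by ext i; fin_cases i <;> simp

lemma hermDual_injective : Function.Injective (hermDual σ) := by
  refine (injective_iff_map_eq_zero _).mpr fun u hu ↦ ?_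
  have h0 : u 0 = 0 := by simpa [hermDual] using congr_fun hu 0
  have h1 : u 1 = 0 := by simpa [hermDual] using congr_fun hu 2
  have h2 : u 2 = 0 := by simpa [hermDual] using congr_fun hu 1
  ext i; fin_cases i <;> simp [h0, h1, h2]

lemma LinearIndependent.map_hermDual (hσ : Function.Surjective σ) {ι : Type*} {v : ι → Fin 3 → F}
    (hv : LinearIndependent F v) : LinearIndependent F (hermDual σ ∘ v) :=
  hv.map_of_surjective_injectiveₛ σ (hermDual σ).toAddMonoidHom hσ hermDual_injective
    (map_smulₛₗ (hermDual σ))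

lemma LinearIndependent.card_le_one_of_isotropic (hσ : Function.Surjective σ) {ι : Type*}
    [Fintype ι] {v : ι → Fin 3 → F} (hv : LinearIndependent F v)
    (hiso : ∀ i j, hermDual σ (v i) ⬝ᵥ v j = 0) : Fintype.card ι ≤ 1 := by
  have hgram : of (hermDual σ ∘ v) * (of v)ᵀ = 0 := by
    ext i j
    exact hiso i j
  have := rank_add_rank_le_card_of_mul_eq_zero hgram
  rw [rank_transpose, LinearIndependent.rank_matrix (M := of v) hv,
    LinearIndependent.rank_matrix (M := of (hermDual σ ∘ v)) (hv.map_hermDual hσ),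
    Fintype.card_fin] at this
  omega

lemma hermF_eq_hermDual_dotProduct {q : ℕ} (hσ : ∀ x, σ x = x ^ q) (v : Fin 3 → F) :
    hermF q v = hermDual σ v ⬝ᵥ v := by
  simp [hermF, hermDual, dotProduct, Fin.sum_univ_three, hσ]
  ring

lemma hermF_smul_add {q : ℕ} (hσ : ∀ x, σ x = x ^ q) (c : F) (a b : Fin 3 → F) :
    hermF q (c • a + b) = hermF q a * c ^ (q + 1) + (hermDual σ a ⬝ᵥ b) * c ^ q +
      (hermDual σ b ⬝ᵥ a) * c + hermF q b := by
  simp only [hermF_eq_hermDual_dotProduct hσ, map_add, map_smulₛₗ, hσ, add_dotProduct,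
    dotProduct_add, smul_dotProduct, dotProduct_smul, smul_eq_mul]
  ring

end HermitianForm

section Polynomial

variable {K : Type*} [Field K]

lemma ncard_setOf_eval_eq_zero_le {p : K[X]} (hp : p ≠ 0) :
    {x | p.eval x = 0}.ncard ≤ p.natDegree := by
  convert p.ncard_rootSet_le K using 2
  ext x
  simp [mem_rootSet, hp]

lemma ncard_setOf_eq_zero_le_succ {q : ℕ} (hq : q ≠ 0) {α : K} (hα : α ≠ 0) (β γ δ : K) :
    {x | α * x ^ (q + 1) + β * x ^ q + γ * x + δ = 0}.ncard ≤ q + 1 := by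
  have hdeg : (C α * X ^ (q + 1) + C β * X ^ q + C γ * X + C δ).natDegree = q + 1 := by
    compute_degree!
    simpa [hq] using hα
  have hp : C α * X ^ (q + 1) + C β * X ^ q + C γ * X + C δ ≠ 0 :=
    ne_zero_of_natDegree_gt (n := 0) (by omega)
  simpa [hdeg] using ncard_setOf_eval_eq_zero_le hp

lemma ncard_setOf_eq_zero_le {q : ℕ} (hq : 2 ≤ q) {β γ δ : K} (h : ¬(β = 0 ∧ γ = 0 ∧ δ = 0)) :
    {x | β * x ^ q + γ * x + δ = 0}.ncard ≤ q := by
  have hp : C β * X ^ q + C γ * X + C δ ≠ 0 := by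
    refine fun hp ↦ h ⟨?_, ?_, ?_⟩
    · simpa [coeff_X, coeff_C, show q ≠ 0 by omega, show 1 ≠ q by omega]
        using congr_arg (coeff · q) hp
    · simpa [coeff_X_pow, coeff_C, show 1 ≠ q by omega] using congr_arg (coeff · 1) hp
    · simpa [coeff_X_pow, coeff_X, coeff_C, show 0 ≠ q by omega] using congr_arg (coeff · 0) hp
  have hdeg : (C β * X ^ q + C γ * X + C δ).natDegree ≤ q := by compute_degree; omega
  simpa using (ncard_setOf_eval_eq_zero_le hp).trans hdeg

end Polynomial

section Lines

variable {K V : Type*} [Field K] [AddCommGroup V] [Module K V]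

lemma Submodule.exists_linearIndependent_pair_eq_span {W : Submodule K V}
    (hW : finrank K W = 2) : ∃ a b : V, LinearIndependent K ![a, b] ∧ W = span K {a, b} := by
  have : Module.Finite K W := Module.finite_of_finrank_pos (by omega)
  let B := finBasisOfFinrankEq K W hW
  have hB : W.subtype ∘ B = ![(B 0 : V), B 1] := by
    ext i : 1; fin_cases i <;> rfl
  refine ⟨B 0, B 1, hB ▸ B.linearIndependent.map' W.subtype W.ker_subtype, ?_⟩
  rw [← Matrix.range_cons_cons_empty, ← hB, Set.range_comp, ← map_span, B.span_eq, map_top,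
    range_subtype]

lemma exists_eq_span_of_le_span_pair {a b : V} {L : Submodule K V} (hL : L ≤ span K {a, b})
    (h1 : finrank K L = 1) : ∃ o : Option K, L = K ∙ o.elim a (· • a + b) := by
  obtain ⟨v, hvL, hv0⟩ := exists_mem_ne_zero_of_ne_bot (p := L) fun h ↦ by
    rw [h, finrank_bot] at h1; omega
  rw [eq_span_singleton_of_mem_of_finrank_eq_one h1 hvL hv0]
  obtain ⟨s, t, rfl⟩ := mem_span_pair.mp (hL hvL)
  by_cases ht : t = 0
  · subst ht
    have hs : s ≠ 0 := by rintro rfl; simp at hv0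
    exact ⟨none, by simpa using span_singleton_smul_eq (IsUnit.mk0 s hs) a⟩
  · refine ⟨some (t⁻¹ * s), ?_⟩
    rw [← span_singleton_smul_eq (IsUnit.mk0 t⁻¹ (inv_ne_zero ht)) (s • a + t • b)]
    simp only [Option.elim, smul_add, smul_smul, inv_mul_cancel₀ ht, one_smul]

lemma ncard_setOf_le_span_pair_le [Finite K] (a b : V) (P : V → Prop) :
    {L : Submodule K V | L ≤ span K {a, b} ∧ finrank K L = 1 ∧ ∀ v ∈ L, P v}.ncard ≤
      {o : Option K | P (o.elim a (· • a + b))}.ncard := by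
  calc _ ≤ ((fun o : Option K ↦ K ∙ o.elim a (· • a + b)) ''
        {o | P (o.elim a (· • a + b))}).ncard := by
        refine Set.ncard_le_ncard ?_ (Set.toFinite _)
        rintro L ⟨hLW, hL1, hP⟩
        obtain ⟨o, rfl⟩ := exists_eq_span_of_le_span_pair hLW hL1
        exact ⟨o, hP _ (mem_span_singleton_self _), rfl⟩
    _ ≤ _ := Set.ncard_image_le (Set.toFinite _)

end Lines

lemma Set.ncard_setOf_option {α : Type*} [Finite α] (P : Option α → Prop) [DecidablePred P] :
    {o | P o}.ncard = {x | P (some x)}.ncard + if P none then 1 else 0 := by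
  by_cases h : P none
  · have : {o | P o} = insert none (some '' {x | P (some x)}) := by
      ext (_ | x) <;> simp [h]
    rw [this, ncard_insert_of_notMem (by simp),
      ncard_image_of_injective _ (Option.some_injective α), if_pos h]
  · have : {o | P o} = some '' {x | P (some x)} := by
      ext (_ | x) <;> simp [h]
    rw [this, ncard_image_of_injective _ (Option.some_injective α), if_neg h, add_zero]

lemma ncard_hermF_eq_zero_le {F : Type*} [Field F] [Finite F] {σ : F →+* F}
    (hσ : Function.Surjective σ) {q : ℕ} (hσq : ∀ x, σ x = x ^ q) (hq : 2 ≤ q)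
    {a b : Fin 3 → F} (hab : LinearIndependent F ![a, b]) :
    {o : Option F | hermF q (o.elim a (· • a + b)) = 0}.ncard ≤ q + 1 := by
  classical
  rw [Set.ncard_setOf_option]
  simp only [Option.elim, hermF_smul_add hσq]
  by_cases ha : hermF q a = 0
  · have hnondeg : ¬(hermDual σ a ⬝ᵥ b = 0 ∧ hermDual σ b ⬝ᵥ a = 0 ∧ hermF q b = 0) := by
      rintro ⟨hab', hba, hbb⟩
      have hiso : ∀ i j, hermDual σ (![a, b] i) ⬝ᵥ ![a, b] j = 0 := by
        simp [Fin.forall_fin_two, ← hermF_eq_hermDual_dotProduct hσq, ha, hab', hba, hbb]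
      simpa using hab.card_le_one_of_isotropic hσ hiso
    simp only [ha, zero_mul, zero_add]
    exact Nat.add_le_add_right (ncard_setOf_eq_zero_le hq hnondeg) 1
  · simp only [ha, if_false, add_zero]
    exact ncard_setOf_eq_zero_le_succ (by omega) ha _ _ _

/-- Every line of the projective plane over 𝔽_{q²} meets the Hermitian curve in
at most q+1 points: every 2-dimensional subspace W of F³ contains at most q+1
one-dimensional subspaces on which F vanishes identically. -/
theorem line_meets_hermitian (q : ℕ) (hq : IsPrimePow q) (F : Type*) [Field F] [Fintype F]
    (hcard : Fintype.card F = q ^ 2)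
    (W : Submodule F (Fin 3 → F)) (hW : Module.finrank F W = 2) :
    {L : Submodule F (Fin 3 → F) |
        L ≤ W ∧ Module.finrank F L = 1 ∧ ∀ v ∈ L, hermF q v = 0}.ncard ≤ q + 1 := by
  obtain ⟨σ, hσ, hσq⟩ := FiniteField.exists_surjective_ringHom_eq_pow hq hcard
  obtain ⟨a, b, hab, rfl⟩ := Submodule.exists_linearIndependent_pair_eq_span hW
  exact (ncard_setOf_le_span_pair_le a b _).trans (ncard_hermF_eq_zero_le hσ hσq hq.two_le hab)
end

section
/- Let q be a prime power, F the finite field with q² elements, and F(v) = v₁^{q+1} − v₂^q·v₃ − v₃^q·v₂ for v ∈ F³. Let u, v, w ∈ F³ be nonzero vectors, pairwise non-proportional, with F(u) = F(v) = F(w) = 0 (i.e., representing three distinct 𝔽_{q²}-rational points of the Hermitian curve). Then there exist an invertible 3×3 matrix M over F and nonzero scalars c, c₁, c₂, c₃ ∈ F such that F(M·x) = c·F(x) for all x ∈ F³, and M·u = c₁·v, M·v = c₂·w, M·w = c₃·u. (That is, there is an automorphism of the Hermitian curve acting as a 3-cycle on any given triangle of rational points.) -/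
/-!
With `σ` the `q`-Frobenius, an involution of `𝔽_{q²}`, `hermF q x = h x x` for the Hermitian
form `h x y = σ x₀ y₀ - σ x₁ y₂ - σ x₂ y₁`, whose matrix is invertible. A basis `e` can
be sent to a family `f` by a matrix scaling `h` by `c` as soon as the Gram matrix of `f` is `c`
times that of `e`. Two non-proportional isotropic vectors `x, y` are never orthogonal: otherwise
both would lie in the common kernel of the independent covectors `h x ·` and `h y ·`, a line.

If `u, v, w` are independent, send `u ↦ v ↦ β w ↦ γ u`: with `a = h u v`, `b = h v w`,
`d = h w u`, the Gram conditions are met by `c = N b / N d` (`N` the norm to `𝔽_q`),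
`β = c a / b`, `γ = c σd / σa`. If `u = s v + t w`, take `n` orthogonal to `v` and `w` and send
`v ↦ -t² w`, `w ↦ s u`, `n ↦ t s n`, hence `u ↦ t s² v`; the one nontrivial Gram condition is
the isotropy of `u`.
-/

namespace HermitianCurve

open Matrix Function

variable {F : Type*} [Field F]

lemma exists_ringHom_eq_pow {q n : ℕ} [Fintype F] (hq : IsPrimePow q)
    (hcard : Fintype.card F = q ^ n) : ∃ σ : F →+* F, ∀ a, σ a = a ^ q := by
  obtain ⟨p, k, hp, -, rfl⟩ := hq
  have : Fact p.Prime := ⟨Nat.prime_iff.mpr hp⟩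
  have : CharP F p := charP_of_card_eq_prime_pow (f := k * n) (by rw [hcard, ← pow_mul])
  exact ⟨iterateFrobenius F p k, iterateFrobenius_def p k⟩

lemma not_linearIndependent_of_cross_eq_zero {x y n : Fin 3 → F} (hn : n ≠ 0)
    (hx : x ⨯₃ n = 0) (hy : y ⨯₃ n = 0) : ¬LinearIndependent F ![x, y] := by
  have parallel {z : Fin 3 → F} (hz : z ⨯₃ n = 0) : ∃ a : F, a • n = z := by
    have : ¬LinearIndependent F ![n, z] := by
      rw [← crossProduct_ne_zero_iff_linearIndependent, ← cross_anticomm, hz, neg_zero, not_not]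
    simpa [LinearIndependent.pair_iff' hn] using this
  obtain ⟨a, rfl⟩ := parallel hx
  obtain ⟨b, rfl⟩ := parallel hy
  intro h
  obtain ⟨-, ha⟩ := LinearIndependent.pair_iff.mp h b (-a) (by
    rw [smul_smul, smul_smul, mul_comm, neg_mul, neg_smul, add_neg_cancel])
  exact h.ne_zero 0 (by simp [neg_eq_zero.mp ha])

def hermMatrix : Matrix (Fin 3) (Fin 3) F := !![1, 0, 0; 0, 0, -1; 0, -1, 0]

lemma hermMatrix_mul_self : (hermMatrix : Matrix (Fin 3) (Fin 3) F) * hermMatrix = 1 := by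
  ext i j
  fin_cases i <;> fin_cases j <;> simp [hermMatrix, Matrix.mul_apply, Fin.sum_univ_three]

lemma det_hermMatrix : (hermMatrix : Matrix (Fin 3) (Fin 3) F).det = -1 := by
  simp [hermMatrix, det_fin_three]

variable (σ : F →+* F)

def hermForm (x y : Fin 3 → F) : F := (σ ∘ x) ⬝ᵥ (hermMatrix *ᵥ y)

lemma hermForm_eq (x y : Fin 3 → F) :
    hermForm σ x y = σ (x 0) * y 0 - σ (x 1) * y 2 - σ (x 2) * y 1 := by
  simp only [hermForm, hermMatrix, dotProduct, mulVec, Fin.sum_univ_three, Function.comp_apply, of_apply,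
    cons_val', cons_val_fin_one, cons_val_zero, cons_val_one, cons_val]
  ring

lemma hermF_eq_hermForm {q : ℕ} (hσ : ∀ a, σ a = a ^ q) (x : Fin 3 → F) :
    hermF q x = hermForm σ x x := by
  rw [hermForm_eq, hermF, hσ, hσ, hσ, pow_succ]

@[simp] lemma hermForm_smul_left (a : F) (x y : Fin 3 → F) :
    hermForm σ (a • x) y = σ a * hermForm σ x y := by
  simp only [hermForm_eq, Pi.smul_apply, smul_eq_mul, map_mul]
  ring

@[simp] lemma hermForm_smul_right (a : F) (x y : Fin 3 → F) :
    hermForm σ x (a • y) = a * hermForm σ x y := by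
  simp only [hermForm_eq, Pi.smul_apply, smul_eq_mul]
  ring

@[simp] lemma hermForm_add_left (x y z : Fin 3 → F) :
    hermForm σ (x + y) z = hermForm σ x z + hermForm σ y z := by
  simp only [hermForm_eq, Pi.add_apply, map_add]
  ring

@[simp] lemma hermForm_add_right (x y z : Fin 3 → F) :
    hermForm σ x (y + z) = hermForm σ x y + hermForm σ x z := by
  simp only [hermForm_eq, Pi.add_apply]
  ring

@[simp] lemma hermForm_zero_right (x : Fin 3 → F) : hermForm σ x 0 = 0 := by
  simp [hermForm_eq]

lemma hermForm_swap (hσ : Involutive σ) (x y : Fin 3 → F) :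
    hermForm σ y x = σ (hermForm σ x y) := by
  simp only [hermForm_eq, map_sub, map_mul, hσ _]
  ring

def dual (x : Fin 3 → F) : Fin 3 → F := (σ ∘ x) ᵥ* hermMatrix

lemma dual_dotProduct (x y : Fin 3 → F) : dual σ x ⬝ᵥ y = hermForm σ x y :=
  (dotProduct_mulVec _ _ _).symm

lemma linearIndependent_dual (hσ : Involutive σ) {x y : Fin 3 → F}
    (h : LinearIndependent F ![x, y]) : LinearIndependent F ![dual σ x, dual σ y] := by
  rw [LinearIndependent.pair_iff] at h ⊢
  intro s t hst
  have hcomp : σ ∘ (σ s • x + σ t • y) = 0 := by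
    have : σ ∘ (σ s • x + σ t • y) = (s • dual σ x + t • dual σ y) ᵥ* hermMatrix := by
      simp only [dual, add_vecMul, smul_vecMul, vecMul_vecMul, hermMatrix_mul_self, vecMul_one]
      ext i
      simp [hσ _]
    rw [this, hst, zero_vecMul]
  have hzero : σ s • x + σ t • y = 0 := funext fun i =>
    (map_eq_zero σ).mp (congrFun hcomp i)
  simpa using h _ _ hzero

theorem hermForm_ne_zero_of_isotropic (hσ : Involutive σ) {x y : Fin 3 → F}
    (hxy : LinearIndependent F ![x, y]) (hx : hermForm σ x x = 0) (hy : hermForm σ y y = 0) :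
    hermForm σ x y ≠ 0 := by
  intro hxy0
  have hyx0 : hermForm σ y x = 0 := by rw [hermForm_swap σ hσ, hxy0, map_zero]
  have hn : dual σ x ⨯₃ dual σ y ≠ 0 :=
    crossProduct_ne_zero_iff_linearIndependent.mpr (linearIndependent_dual σ hσ hxy)
  refine not_linearIndependent_of_cross_eq_zero hn ?_ ?_ hxy
  · rw [cross_cross_eq_smul_sub_smul', dotProduct_comm, dual_dotProduct, dual_dotProduct, hyx0,
      hx, zero_smul, zero_smul, sub_zero]
  · rw [cross_cross_eq_smul_sub_smul', dotProduct_comm, dual_dotProduct, dual_dotProduct, hy,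
      hxy0, zero_smul, zero_smul, sub_zero]

def gram (P : Matrix (Fin 3) (Fin 3) F) : Matrix (Fin 3) (Fin 3) F :=
  of fun i j => hermForm σ (P i) (P j)

lemma gram_eq_mul (P : Matrix (Fin 3) (Fin 3) F) : gram σ P = P.map σ * hermMatrix * Pᵀ := by
  ext i j
  rw [gram, of_apply, hermForm, dotProduct_mulVec, mul_apply']
  rfl

lemma gram_mul (P N : Matrix (Fin 3) (Fin 3) F) :
    gram σ (P * N) = P.map σ * gram σ N * Pᵀ := by
  simp only [gram_eq_mul, Matrix.map_mul, transpose_mul, Matrix.mul_assoc]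

lemma gram_eq_smul_of_upper (hσ : Involutive σ) {c : F} (hc : σ c = c)
    {e₀ e₁ e₂ f₀ f₁ f₂ : Fin 3 → F}
    (h₀₀ : hermForm σ f₀ f₀ = c * hermForm σ e₀ e₀) (h₀₁ : hermForm σ f₀ f₁ = c * hermForm σ e₀ e₁)
    (h₀₂ : hermForm σ f₀ f₂ = c * hermForm σ e₀ e₂) (h₁₁ : hermForm σ f₁ f₁ = c * hermForm σ e₁ e₁)
    (h₁₂ : hermForm σ f₁ f₂ = c * hermForm σ e₁ e₂) (h₂₂ : hermForm σ f₂ f₂ = c * hermForm σ e₂ e₂) :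
    gram σ ![f₀, f₁, f₂] = c • gram σ ![e₀, e₁, e₂] := by
  have swap {x y x' y' : Fin 3 → F} (h : hermForm σ x' y' = c * hermForm σ x y) :
      hermForm σ y' x' = c * hermForm σ y x := by
    rw [hermForm_swap σ hσ, h, map_mul, hc, ← hermForm_swap σ hσ]
  ext i j
  rw [Matrix.smul_apply, smul_eq_mul]
  fin_cases i <;> fin_cases j
  exacts [h₀₀, h₀₁, h₀₂, swap h₀₁, h₁₁, h₁₂, swap h₀₂, swap h₁₂, h₂₂]

lemma hermForm_mulVec_of_gram_eq_smul {M : Matrix (Fin 3) (Fin 3) F} {c : F}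
    (hM : gram σ Mᵀ = c • hermMatrix) (x y : Fin 3 → F) :
    hermForm σ (M *ᵥ x) (M *ᵥ y) = c * hermForm σ x y := by
  have hσM : σ ∘ (M *ᵥ x) = M.map σ *ᵥ (σ ∘ x) := funext (RingHom.map_mulVec σ M x)
  calc hermForm σ (M *ᵥ x) (M *ᵥ y) = (σ ∘ x) ⬝ᵥ (gram σ Mᵀ *ᵥ y) := by
        rw [hermForm, hσM, gram_eq_mul, transpose_transpose, ← mulVec_mulVec, ← mulVec_mulVec,
          dotProduct_mulVec _ (Mᵀ.map σ), transpose_map, vecMul_transpose]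
    _ = c * hermForm σ x y := by
        rw [hM, smul_mulVec, dotProduct_smul, smul_eq_mul, hermForm]

lemma isUnit_of_gram_eq_smul {N : Matrix (Fin 3) (Fin 3) F} {c : F} (hc : c ≠ 0)
    (hN : gram σ N = c • hermMatrix) : IsUnit N := by
  rw [isUnit_iff_isUnit_det, isUnit_iff_ne_zero]
  intro h0
  have := congrArg det hN
  rw [gram_eq_mul, det_mul, det_mul, det_transpose, h0, mul_zero, det_smul, det_hermMatrix] at this
  simp [hc] at this

theorem exists_mulVec_eq_of_gram_eq_smul {P Q : Matrix (Fin 3) (Fin 3) F} {c : F}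
    (hP : IsUnit P) (h : gram σ Q = c • gram σ P) :
    ∃ M : Matrix (Fin 3) (Fin 3) F, gram σ Mᵀ = c • hermMatrix ∧ ∀ i, M *ᵥ P i = Q i := by
  have hPdet : IsUnit P.det := (isUnit_iff_isUnit_det P).mp hP
  have hPN : P * (P⁻¹ * Q) = Q := mul_nonsing_inv_cancel_left P Q hPdet
  refine ⟨(P⁻¹ * Q)ᵀ, ?_, fun i => ?_⟩
  · have hσP : IsUnit (P.map σ) := by
      have := hPdet.map σ
      rw [RingHom.map_det] at this
      exact (isUnit_iff_isUnit_det _).mpr this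
    apply hσP.mul_left_cancel
    apply ((isUnit_transpose P).mpr hP).mul_right_cancel
    rw [transpose_transpose, ← gram_mul, hPN, h, gram_eq_mul, mul_smul_comm, smul_mul_assoc]
  · rw [mulVec_transpose, ← mul_apply_eq_vecMul, hPN]

def CyclesLines (M : Matrix (Fin 3) (Fin 3) F) (u v w : Fin 3 → F) : Prop :=
  ∃ c₁ c₂ c₃ : F, c₁ ≠ 0 ∧ c₂ ≠ 0 ∧ c₃ ≠ 0 ∧
    M *ᵥ u = c₁ • v ∧ M *ᵥ v = c₂ • w ∧ M *ᵥ w = c₃ • u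

variable {σ}

theorem exists_cycle_of_linearIndependent (hσ : Involutive σ) {u v w : Fin 3 → F}
    (huvw : LinearIndependent F ![u, v, w]) (huv : LinearIndependent F ![u, v])
    (hvw : LinearIndependent F ![v, w]) (hwu : LinearIndependent F ![w, u])
    (hu : hermForm σ u u = 0) (hv : hermForm σ v v = 0) (hw : hermForm σ w w = 0) :
    ∃ (M : Matrix (Fin 3) (Fin 3) F) (c : F), c ≠ 0 ∧ gram σ Mᵀ = c • hermMatrix ∧
      CyclesLines M u v w := by
  obtain ⟨a, ha_def⟩ : ∃ a, hermForm σ u v = a := ⟨_, rfl⟩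
  obtain ⟨b, hb_def⟩ : ∃ b, hermForm σ v w = b := ⟨_, rfl⟩
  obtain ⟨d, hd_def⟩ : ∃ d, hermForm σ w u = d := ⟨_, rfl⟩
  have ha : a ≠ 0 := ha_def ▸ hermForm_ne_zero_of_isotropic σ hσ huv hu hv
  have hb : b ≠ 0 := hb_def ▸ hermForm_ne_zero_of_isotropic σ hσ hvw hv hw
  have hd : d ≠ 0 := hd_def ▸ hermForm_ne_zero_of_isotropic σ hσ hwu hw hu
  have hσa : σ a ≠ 0 := (map_ne_zero σ).mpr ha
  have hσb : σ b ≠ 0 := (map_ne_zero σ).mpr hb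
  have hσd : σ d ≠ 0 := (map_ne_zero σ).mpr hd
  set c := σ b * b / (σ d * d) with hc_def
  have hc : σ c = c := by simp only [c, map_div₀, map_mul, hσ _, mul_comm]
  have hc0 : c ≠ 0 := by positivity
  set β := c * a / b with hβ_def
  set γ := c * σ d / σ a with hγ_def
  have hQ : gram σ ![v, β • w, γ • u] = c • gram σ ![u, v, w] :=
    gram_eq_smul_of_upper σ hσ hc (by rw [hv, hu, mul_zero])
      (by rw [hermForm_smul_right, hb_def, ha_def, hβ_def]; field_simp)
      (by rw [hermForm_smul_right, hermForm_swap σ hσ u v, ha_def, hermForm_swap σ hσ w u, hd_def,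
        hγ_def]; field_simp)
      (by simp only [hermForm_smul_left, hermForm_smul_right, hw, hv, mul_zero])
      (by rw [hermForm_smul_left, hermForm_smul_right, hd_def, hb_def, hβ_def, hγ_def, map_div₀,
        map_mul, hc, hc_def]; field_simp)
      (by simp only [hermForm_smul_left, hermForm_smul_right, hu, hw, mul_zero])
  obtain ⟨M, hM, hMPQ⟩ :=
    exists_mulVec_eq_of_gram_eq_smul σ (linearIndependent_rows_iff_isUnit.mp huvw) hQ
  refine ⟨M, c, hc0, hM, 1, β, γ, one_ne_zero, by positivity, by positivity, ?_, ?_, ?_⟩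
  · simpa using hMPQ 0
  · simpa using hMPQ 1
  · simpa using hMPQ 2

theorem exists_cycle_of_mem_span (hσ : Involutive σ) {u v w : Fin 3 → F}
    (huv : LinearIndependent F ![u, v]) (hvw : LinearIndependent F ![v, w])
    (hwu : LinearIndependent F ![w, u]) {s t : F} (hst : s • v + t • w = u)
    (hu : hermForm σ u u = 0) (hv : hermForm σ v v = 0) (hw : hermForm σ w w = 0) :
    ∃ (M : Matrix (Fin 3) (Fin 3) F) (c : F), c ≠ 0 ∧ gram σ Mᵀ = c • hermMatrix ∧
      CyclesLines M u v w := by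
  have hs : s ≠ 0 := by
    rintro rfl
    simpa using (LinearIndependent.pair_iff.mp hwu t (-1) (by simp [← hst])).2
  have ht : t ≠ 0 := by
    rintro rfl
    simpa using (LinearIndependent.pair_iff.mp huv (-1) s (by simp [← hst])).1
  obtain ⟨a, ha_def⟩ : ∃ a, hermForm σ v w = a := ⟨_, rfl⟩
  have ha : a ≠ 0 := ha_def ▸ hermForm_ne_zero_of_isotropic σ hσ hvw hv hw
  have hwv : hermForm σ w v = σ a := by rw [hermForm_swap σ hσ, ha_def]
  have hrel : σ s * t * a + σ t * s * σ a = 0 := by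
    simp only [← hst, hermForm_add_left, hermForm_add_right, hermForm_smul_left,
      hermForm_smul_right, hv, hw, ha_def, hwv] at hu
    linear_combination hu
  set n := dual σ v ⨯₃ dual σ w
  have hn : n ≠ 0 :=
    crossProduct_ne_zero_iff_linearIndependent.mpr (linearIndependent_dual σ hσ hvw)
  have hvn : hermForm σ v n = 0 := by rw [← dual_dotProduct, dot_self_cross]
  have hwn : hermForm σ w n = 0 := by rw [← dual_dotProduct, dot_cross_self]
  have hwu' : hermForm σ w u = s * σ a := by simp [← hst, hw, hwv]
  have hun : hermForm σ u n = 0 := by simp [← hst, hvn, hwn]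
  have hvwn : LinearIndependent F ![v, w, n] := by
    rw [Fintype.linearIndependent_iff]
    intro g hg
    simp only [Fin.sum_univ_three] at hg
    have h1 : g 1 = 0 := by simpa [hv, hvn, ha_def, ha] using congrArg (hermForm σ v) hg
    have h0 : g 0 = 0 := by simpa [hw, hwn, hwv, ha] using congrArg (hermForm σ w) hg
    have h2 : g 2 = 0 := by simpa [h0, h1, hn] using hg
    intro i
    fin_cases i <;> assumption
  set c := σ (t * s) * (t * s) with hc_def
  have hc : σ c = c := by simp only [c, map_mul, hσ _]; ring
  have hQ : gram σ ![(-t ^ 2) • w, s • u, (t * s) • n] = c • gram σ ![v, w, n] :=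
    gram_eq_smul_of_upper σ hσ hc
      (by simp only [hermForm_smul_left, hermForm_smul_right, hw, hv, mul_zero])
      (by rw [hermForm_smul_left, hermForm_smul_right, hwu', ha_def, hc_def, map_neg, map_pow,
        map_mul]; linear_combination (-(σ t * s)) * hrel)
      (by simp only [hermForm_smul_left, hermForm_smul_right, hwn, hvn, mul_zero])
      (by simp only [hermForm_smul_left, hermForm_smul_right, hu, hw, mul_zero])
      (by simp only [hermForm_smul_left, hermForm_smul_right, hun, hwn, mul_zero])
      (by rw [hermForm_smul_left, hermForm_smul_right, hc_def]; ring)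
  obtain ⟨M, hM, hMPQ⟩ :=
    exists_mulVec_eq_of_gram_eq_smul σ (linearIndependent_rows_iff_isUnit.mp hvwn) hQ
  have hMv : M *ᵥ v = (-t ^ 2) • w := by simpa using hMPQ 0
  have hMw : M *ᵥ w = s • u := by simpa using hMPQ 1
  have hMu : M *ᵥ u = (t * s ^ 2) • v := by
    rw [← hst, mulVec_add, mulVec_smul, mulVec_smul, hMv, hMw, ← hst]
    module
  have hts : t * s ≠ 0 := mul_ne_zero ht hs
  exact ⟨M, c, mul_ne_zero ((map_ne_zero σ).mpr hts) hts, hM, t * s ^ 2, -t ^ 2, s,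
    by positivity, neg_ne_zero.mpr (pow_ne_zero 2 ht), hs, hMu, hMv, hMw⟩

theorem exists_cycle (hσ : Involutive σ) {u v w : Fin 3 → F}
    (huv : LinearIndependent F ![u, v]) (hvw : LinearIndependent F ![v, w])
    (hwu : LinearIndependent F ![w, u])
    (hu : hermForm σ u u = 0) (hv : hermForm σ v v = 0) (hw : hermForm σ w w = 0) :
    ∃ (M : Matrix (Fin 3) (Fin 3) F) (c : F), c ≠ 0 ∧ gram σ Mᵀ = c • hermMatrix ∧
      CyclesLines M u v w := by
  by_cases hspan : u ∈ Submodule.span F {v, w}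
  · obtain ⟨s, t, hst⟩ := Submodule.mem_span_pair.mp hspan
    exact exists_cycle_of_mem_span hσ huv hvw hwu hst hu hv hw
  · have huvw : LinearIndependent F ![u, v, w] :=
      linearIndependent_finCons.mpr ⟨hvw, by simpa [Set.pair_comm w v] using hspan⟩
    exact exists_cycle_of_linearIndependent hσ huvw huv hvw hwu hu hv hw

end HermitianCurve

open HermitianCurve Function

/-- For any three distinct rational points of the Hermitian curve there is an
automorphism of the curve acting as a 3-cycle on them. -/
theorem three_cycle_automorphism (q : ℕ) (hq : IsPrimePow q) (F : Type*) [Field F] [Fintype F]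
    (hcard : Fintype.card F = q ^ 2)
    (u v w : Fin 3 → F) (hu : u ≠ 0) (hv : v ≠ 0) (hw : w ≠ 0)
    (huv : ∀ c : F, v ≠ c • u) (hvw : ∀ c : F, w ≠ c • v) (hwu : ∀ c : F, u ≠ c • w)
    (hFu : hermF q u = 0) (hFv : hermF q v = 0) (hFw : hermF q w = 0) :
    ∃ (M : Matrix (Fin 3) (Fin 3) F) (c c₁ c₂ c₃ : F),
      IsUnit M ∧ c ≠ 0 ∧ c₁ ≠ 0 ∧ c₂ ≠ 0 ∧ c₃ ≠ 0 ∧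
      (∀ x : Fin 3 → F, hermF q (M.mulVec x) = c * hermF q x) ∧
      M.mulVec u = c₁ • v ∧ M.mulVec v = c₂ • w ∧ M.mulVec w = c₃ • u := by
  obtain ⟨σ, hσq⟩ := exists_ringHom_eq_pow hq hcard
  have hσ : Involutive σ := fun a => by
    rw [hσq, hσq, ← pow_mul, ← sq, ← hcard, FiniteField.pow_card]
  have pair {x y : Fin 3 → F} (hx : x ≠ 0) (hxy : ∀ c : F, y ≠ c • x) :
      LinearIndependent F ![x, y] :=
    (LinearIndependent.pair_iff' hx).mpr fun c h => hxy c h.symm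
  rw [hermF_eq_hermForm σ hσq] at hFu hFv hFw
  obtain ⟨M, c, hc, hM, c₁, c₂, c₃, h₁, h₂, h₃, hMu, hMv, hMw⟩ :=
    exists_cycle hσ (pair hu huv) (pair hv hvw) (pair hw hwu) hFu hFv hFw
  refine ⟨M, c, c₁, c₂, c₃, (Matrix.isUnit_transpose M).mp (isUnit_of_gram_eq_smul σ hc hM), hc,
    h₁, h₂, h₃, fun x => ?_, hMu, hMv, hMw⟩
  rw [hermF_eq_hermForm σ hσq, hermF_eq_hermForm σ hσq, hermForm_mulVec_of_gram_eq_smul σ hM]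
end
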